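/- arXiv:1908.06039 — 2 statements merged into one kernel-verified Lean document; each statement's English description precedes it below -/
import Mathlib

section
/- Let σ : V → V be a bijection, and let w ∈ V be a word with Σ_{y'∈Y} #(w ∧ y' | S) > 0. Then the class-specific word importance is invariant under the perturbation: t(σ(w) | σ̃S) = t(w | S). -/
/-- `labCount S w y` = total number of occurrences of the word `w` in the
documents of the support set `S` whose label is `y`. -/
def labCount {V Y : Type*} [DecidableEq V] [DecidableEq Y]
    (S : List (List V × Y)) (w : V) (y : Y) : ℕ :=
  (S.map (fun p => if p.2 = y then p.1.count w else 0)).sum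

/-- The perturbed support set: apply the word substitution `σ` to every word
of every document, keeping labels unchanged. -/
def perturbSupport {V Y : Type*} (σ : V → V) (S : List (List V × Y)) :
    List (List V × Y) :=
  S.map (fun p => (p.1.map σ, p.2))

/-- The maximum-likelihood conditional estimate
`P̂(y | w, S) = #(w ∧ y | S) / Σ_{y'} #(w ∧ y' | S)`. -/
noncomputable def mleCond {V Y : Type*} [DecidableEq V] [DecidableEq Y] [Fintype Y]
    (S : List (List V × Y)) (w : V) (y : Y) : ℝ :=
  (labCount S w y : ℝ) / ∑ y' : Y, (labCount S w y' : ℝ)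

/-- Shannon entropy `H(p) = -Σ_y p(y) log p(y)`. -/
noncomputable def shannonEntropy {Y : Type*} [Fintype Y] (p : Y → ℝ) : ℝ :=
  -∑ y : Y, p y * Real.log (p y)

/-- Class-specific word importance `t(w | S) = 1 / H(P̂(· | w, S))`. -/
noncomputable def classImportance {V Y : Type*} [DecidableEq V] [DecidableEq Y]
    [Fintype Y] (S : List (List V × Y)) (w : V) : ℝ :=
  1 / shannonEntropy (fun y => mleCond S w y)

/-- For a bijective word substitution `σ` and a word `w` occurring in `S`
(positive total count), the class-specific word importance is invariant:
`t(σ(w) | σ̃S) = t(w | S)`. -/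
theorem classImportance_perturb {V Y : Type*} [Fintype V] [DecidableEq V]
    [Fintype Y] [DecidableEq Y]
    (σ : V → V) (hσ : Function.Bijective σ)
    (S : List (List V × Y)) (w : V)
    (hw : 0 < ∑ y' : Y, labCount S w y') :
    classImportance (perturbSupport σ S) (σ w) = classImportance S w := by
  have key : ∀ y, labCount (perturbSupport σ S) (σ w) y = labCount S w y := by
    intro y
    unfold labCount perturbSupport
    rw [List.map_map]
    congr 1
    apply List.map_congr_left
    intro p _
    simp [List.count_map_of_injective _ σ hσ.injective]
  simp only [classImportance, shannonEntropy, mleCond, key]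
end

section
/- (Theorem 1, functional form.) Let σ : V → V be a bijection with P(σ(w)) = P(w) for every w ∈ V. Let x = (x_1, …, x_T) be a document such that every word x_i satisfies Σ_{y'∈Y} #(x_i ∧ y' | S) > 0, and let x̃ = (σ(x_1), …, σ(x_T)) be its perturbation. Then the distributional signature of x̃ relative to (σ̃S, P) equals the distributional signature of x relative to (S, P), i.e. Sig(x̃ | σ̃S, P) = Sig(x | S, P). Consequently, for every function F mapping signature sequences (finite lists of pairs of reals) to attention vectors (finite lists of reals), F(Sig(x̃ | σ̃S, P)) = F(Sig(x | S, P)); in particular any attention generator that depends on its input only through the distributional signatures produces identical outputs on x and x̃. -/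
/-- General word importance `s(w) = ε / (ε + P(w))`. -/
noncomputable def genImportance {V : Type*} (ε : ℝ) (P : V → NNReal) (w : V) : ℝ :=
  ε / (ε + (P w : ℝ))

/-- The distributional signature of a document `x` relative to `(S, P)`:
the sequence `((s(x_1), t(x_1 | S)), …, (s(x_T), t(x_T | S)))`. -/
noncomputable def signature {V Y : Type*} [DecidableEq V] [DecidableEq Y] [Fintype Y]
    (ε : ℝ) (P : V → NNReal) (S : List (List V × Y)) (x : List V) : List (ℝ × ℝ) :=
  x.map (fun w => (genImportance ε P w, classImportance S w))

lemma labCount_perturb {V Y : Type*} [DecidableEq V] [DecidableEq Y]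
    (σ : V → V) (hσ : Function.Injective σ)
    (S : List (List V × Y)) (w : V) (y : Y) :
    labCount (perturbSupport σ S) (σ w) y = labCount S w y := by
  unfold labCount perturbSupport
  rw [List.map_map]
  congr 1
  apply List.map_congr_left
  intro p _
  simp [List.count_map_of_injective _ σ hσ]

/-- Theorem 1 (functional form): for a unigram-probability-preserving
bijective word substitution `σ`, the distributional signature of the
perturbed document relative to `(σ̃S, P)` equals that of the original
document relative to `(S, P)`; consequently any attention generator that
depends on its input only through the distributional signatures produces
identical outputs on `x` and its perturbation. -/
theorem signature_perturb_invariant {V Y : Type*} [Fintype V] [DecidableEq V]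
    [Fintype Y] [DecidableEq Y]
    (ε : ℝ) (hε : 0 < ε) (P : V → NNReal)
    (σ : V → V) (hσ : Function.Bijective σ)
    (hP : ∀ w : V, P (σ w) = P w)
    (S : List (List V × Y)) (x : List V)
    (hx : ∀ w ∈ x, 0 < ∑ y' : Y, labCount S w y') :
    signature ε P (perturbSupport σ S) (x.map σ) = signature ε P S x ∧
      ∀ F : List (ℝ × ℝ) → List ℝ,
        F (signature ε P (perturbSupport σ S) (x.map σ)) = F (signature ε P S x) := by
  have key : signature ε P (perturbSupport σ S) (x.map σ) = signature ε P S x := by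
    unfold signature
    rw [List.map_map]
    apply List.map_congr_left
    intro w _
    have h1 : genImportance ε P (σ w) = genImportance ε P w := by
      simp [genImportance, hP]
    have h2 : classImportance (perturbSupport σ S) (σ w) = classImportance S w := by
      have hm : ∀ y, mleCond (perturbSupport σ S) (σ w) y = mleCond S w y := by
        intro y
        unfold mleCond
        simp [labCount_perturb σ hσ.injective]
      simp [classImportance, shannonEntropy, hm]
    simp [h1, h2]
  exact ⟨key, fun F => by rw [key]⟩
end
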